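/- Let G be a subgroup of A × B × C, let S_AC = {(a,1,c) ∈ G} and S_BC = {(1,b,c) ∈ G}, and let N = S_AC · S_BC. Then N is normal in G, and writing G_A = π_A(G), N_A = π_A(N), G_B = π_B(G), N_B = π_B(N), the quotient groups G_A/N_A and G_B/N_B are isomorphic. -/

import Mathlib

/-- Projection of `A × B × C` onto `A`. -/
def projA (A B C : Type*) [Group A] [Group B] [Group C] : A × B × C →* A :=
  MonoidHom.fst A (B × C)

/-- Projection of `A × B × C` onto `B`. -/
def projB (A B C : Type*) [Group A] [Group B] [Group C] : A × B × C →* B :=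
  (MonoidHom.fst B C).comp (MonoidHom.snd A (B × C))

/-!
Write `p = π_A` and `q = π_B`, so that `S_AC = G ⊓ ker q` and `S_BC = G ⊓ ker p`. Both are
normal in `G`, hence so is their product `N`. Since `G ⊓ ker p ≤ N ≤ G`, an element of `G`
lies in `N` as soon as its image under `p` lies in `p(N)`; so `p` induces an isomorphism
`G / N ≃ p(G) / p(N)`, and likewise for `q`. Composing the two gives `G_A / N_A ≃ G_B / N_B`.
-/

section

variable {M P Q : Type*} [Group M] [Group P] [Group Q]

theorem conj_mem_inf_ker (f : M →* P) {G : Subgroup M} {g x : M} (hg : g ∈ G)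
    (hx : x ∈ G ⊓ f.ker) : g * x * g⁻¹ ∈ G ⊓ f.ker :=
  ⟨G.mul_mem (G.mul_mem hg hx.1) (G.inv_mem hg), f.normal_ker.conj_mem x hx.2 g⟩

theorem mem_of_map_mem_of_inf_ker_le (f : M →* P) {G N : Subgroup M} (hNG : N ≤ G)
    (hker : G ⊓ f.ker ≤ N) {g : M} (hg : g ∈ G) (hgN : f g ∈ N.map f) : g ∈ N := by
  obtain ⟨n, hn, hfn⟩ := hgN
  have hker_mem : n⁻¹ * g ∈ G ⊓ f.ker :=
    ⟨G.mul_mem (G.inv_mem (hNG hn)) hg, by simp [hfn]⟩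
  simpa using N.mul_mem hn (hker hker_mem)

noncomputable def quotientEquivQuotientMap (f : M →* P) {G N : Subgroup M} (hNG : N ≤ G)
    (hker : G ⊓ f.ker ≤ N) [(N.subgroupOf G).Normal]
    [((N.map f).subgroupOf (G.map f)).Normal] :
    G ⧸ N.subgroupOf G ≃* G.map f ⧸ (N.map f).subgroupOf (G.map f) :=
  let φ : G →* G.map f ⧸ (N.map f).subgroupOf (G.map f) :=
    (QuotientGroup.mk' _).comp (f.subgroupMap G)
  have hφ : Function.Surjective φ :=
    (QuotientGroup.mk'_surjective _).comp (f.subgroupMap_surjective G)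
  have hker_φ : N.subgroupOf G = φ.ker := by
    ext g
    simp only [Subgroup.mem_subgroupOf, MonoidHom.mem_ker, φ, MonoidHom.comp_apply,
      QuotientGroup.mk'_apply, QuotientGroup.eq_one_iff]
    exact ⟨fun hg => ⟨g, hg, rfl⟩, mem_of_map_mem_of_inf_ker_le f hNG hker g.2⟩
  (QuotientGroup.quotientMulEquivOfEq hker_φ).trans
    (QuotientGroup.quotientKerEquivOfSurjective φ hφ)

variable (p : M →* P) (q : M →* Q) {G N : Subgroup M}
  (hN : ∀ g, g ∈ N ↔ ∃ x ∈ G ⊓ q.ker, ∃ y ∈ G ⊓ p.ker, g = x * y)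
include hN

theorem le_of_forall_mem_iff_mul : N ≤ G := by
  intro g hg
  obtain ⟨x, hx, y, hy, rfl⟩ := (hN g).1 hg
  exact G.mul_mem hx.1 hy.1

theorem inf_ker_left_le_of_forall_mem_iff_mul : G ⊓ q.ker ≤ N :=
  fun x hx => (hN x).2 ⟨x, hx, 1, (G ⊓ p.ker).one_mem, (mul_one x).symm⟩

theorem inf_ker_right_le_of_forall_mem_iff_mul : G ⊓ p.ker ≤ N :=
  fun y hy => (hN y).2 ⟨1, (G ⊓ q.ker).one_mem, y, hy, (one_mul y).symm⟩

theorem conj_mem_of_forall_mem_iff_mul {g n : M} (hg : g ∈ G) (hn : n ∈ N) :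
    g * n * g⁻¹ ∈ N := by
  obtain ⟨x, hx, y, hy, rfl⟩ := (hN n).1 hn
  exact (hN _).2 ⟨_, conj_mem_inf_ker q hg hx, _, conj_mem_inf_ker p hg hy, by group⟩

end

theorem stmt2 {A B C : Type*} [Group A] [Group B] [Group C]
    (G SAC SBC N : Subgroup (A × B × C))
    (hSAC : ∀ g : A × B × C, g ∈ SAC ↔ g ∈ G ∧ g.2.1 = 1)
    (hSBC : ∀ g : A × B × C, g ∈ SBC ↔ g ∈ G ∧ g.1 = 1)
    (hN : ∀ g : A × B × C, g ∈ N ↔ ∃ x ∈ SAC, ∃ y ∈ SBC, g = x * y)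
    [((N.map (projA A B C)).subgroupOf (G.map (projA A B C))).Normal]
    [((N.map (projB A B C)).subgroupOf (G.map (projB A B C))).Normal] :
    (∀ g ∈ G, ∀ n ∈ N, g * n * g⁻¹ ∈ N) ∧
    Nonempty
      ((↥(G.map (projA A B C)) ⧸ (N.map (projA A B C)).subgroupOf (G.map (projA A B C))) ≃*
       (↥(G.map (projB A B C)) ⧸ (N.map (projB A B C)).subgroupOf (G.map (projB A B C)))) := by
  have hSAC_eq : SAC = G ⊓ (projB A B C).ker := Subgroup.ext hSAC
  have hSBC_eq : SBC = G ⊓ (projA A B C).ker := Subgroup.ext hSBC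
  subst hSAC_eq hSBC_eq
  have hconj : ∀ g ∈ G, ∀ n ∈ N, g * n * g⁻¹ ∈ N := fun g hg n hn =>
    conj_mem_of_forall_mem_iff_mul _ _ hN hg hn
  have : (N.subgroupOf G).Normal := ⟨fun n hn g => hconj g g.2 n hn⟩
  have hNG := le_of_forall_mem_iff_mul _ _ hN
  exact ⟨hconj, ⟨(quotientEquivQuotientMap (projA A B C) hNG
      (inf_ker_right_le_of_forall_mem_iff_mul _ _ hN)).symm.trans
    (quotientEquivQuotientMap (projB A B C) hNG
      (inf_ker_left_le_of_forall_mem_iff_mul _ _ hN))⟩⟩
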